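/- arXiv:2601.11168 — 6 statements merged into one kernel-verified Lean document; each statement's English description precedes it below -/
import Mathlib

section
/- In any commutative associative algebra A with derivation D, the symmetrized Novikov product a ∘ b := D(a)b + aD(b) = D(ab) satisfies the Tortken identity: (a∘b)∘(c∘d) − (a∘d)∘(c∘b) = (a,b,c)∘ ∘ d − (a,d,c)∘ ∘ b, where (x,y,z)∘ = x∘(y∘z) − (x∘y)∘z. -/
/-- The symmetrized Novikov product `a ∘ b := D(ab)` on a commutative associative
differential algebra. -/
noncomputable def sprod {F A : Type*} [Field F] [CommRing A] [Algebra F A]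
    (D : Derivation F A A) (a b : A) : A := D (a * b)

/-- The associator of the symmetrized product. -/
noncomputable def sassoc {F A : Type*} [Field F] [CommRing A] [Algebra F A]
    (D : Derivation F A A) (x y z : A) : A :=
  sprod D x (sprod D y z) - sprod D (sprod D x y) z

/-- the symmetrized product satisfies the Tortken identity. -/
theorem stmt3 {F A : Type*} [Field F] [CharZero F] [CommRing A] [Algebra F A]
    (D : Derivation F A A) (a b c d : A) :
    sprod D (sprod D a b) (sprod D c d) - sprod D (sprod D a d) (sprod D c b) =
      sprod D (sassoc D a b c) d - sprod D (sassoc D a d c) b := by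
  simp only [sprod, sassoc, Derivation.leibniz, smul_eq_mul, map_add, map_sub]
  ring
end

section
/- In any commutative associative algebra A with derivation D over a field of characteristic zero, the symmetrized product a ∘ b := D(ab) satisfies the degree-5 identity: (((a∘a)∘a)∘b)∘b + (((a∘b)∘b)∘a)∘a + 2(((a∘a)∘b)∘b)∘a + 2(((a∘b)∘a)∘a)∘b − 3(((a∘a)∘b)∘a)∘b − 3(((a∘b)∘a)∘b)∘a = 0. -/
/-- the symmetrized product satisfies the degree-5 identity. -/
theorem stmt4 {F A : Type*} [Field F] [CharZero F] [CommRing A] [Algebra F A]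
    (D : Derivation F A A) (a b : A) :
    sprod D (sprod D (sprod D (sprod D a a) a) b) b
      + sprod D (sprod D (sprod D (sprod D a b) b) a) a
      + 2 • sprod D (sprod D (sprod D (sprod D a a) b) b) a
      + 2 • sprod D (sprod D (sprod D (sprod D a b) a) a) b
      - 3 • sprod D (sprod D (sprod D (sprod D a a) b) a) b
      - 3 • sprod D (sprod D (sprod D (sprod D a b) a) b) a = 0 := by
  simp only [sprod, Derivation.leibniz, map_add, smul_eq_mul, mul_add, add_mul]
  ring
end

section
/- In the differential polynomial ring F{x} in one variable over a field of characteristic zero, if f is a differential polynomial with E(f) = 0, where E is the Euler operator, then f = c + D(g) for some constant c and some differential polynomial g; in particular if f has no constant term then f lies in the image of D. -/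
/-!
Let `θ = ∑ xᵢ ∂/∂xᵢ` be the Euler derivation, which multiplies a homogeneous polynomial of
degree `n` by `n`. Integrating by parts, `xᵢ h ≡ (-1)ⁱ x₀ Dⁱ h` modulo the image of `D`, so
`θ f ≡ x₀ E(f)`, and `E(f) = 0` gives `θ f = D g`. Both `θ` and `D` preserve total degree, so
comparing homogeneous components gives `n fₙ = D gₙ`; in characteristic zero every component of
positive degree therefore lies in the image of `D`.
-/

open MvPolynomial

/-- The derivation `D` on `F{x}`, sending `x^{(k)} = X k` to `x^{(k+1)} = X (k+1)`. -/
noncomputable def Dx (F : Type*) [Field F] :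
    Derivation F (MvPolynomial ℕ F) (MvPolynomial ℕ F) :=
  mkDerivation F fun k => X (k + 1)

/-- The Euler operator `E(f) = Σ_{i≥0} (−D)^i (∂f/∂x^{(i)})`. -/
noncomputable def eulerOp (F : Type*) [Field F] (f : MvPolynomial ℕ F) : MvPolynomial ℕ F :=
  ∑ᶠ i : ℕ, ((-1 : ℤ) ^ i) • ((⇑(Dx F))^[i] (pderiv i f))

namespace MvPolynomial

variable {R σ : Type*}

section CommSemiring

variable [CommSemiring R]

lemma vars_homogeneousComponent_subset (n : ℕ) (p : MvPolynomial σ R) :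
    (homogeneousComponent n p).vars ⊆ p.vars := by
  intro i hi
  obtain ⟨d, hd, hid⟩ := (mem_vars_iff_mem_support i).mp hi
  rw [support_homogeneousComponent, Finset.mem_filter] at hd
  exact (mem_vars_iff_mem_support i).mpr ⟨d, hd.1, hid⟩

variable {D : Derivation R (MvPolynomial σ R) (MvPolynomial σ R)}

lemma isHomogeneous_derivation_monomial (hD : ∀ i, (D (X i)).IsHomogeneous 1)
    (d : σ →₀ ℕ) (r : R) : (D (monomial d r)).IsHomogeneous d.degree := by
  induction d using Finsupp.induction with
  | zero => simpa [← C_apply] using isHomogeneous_zero σ R 0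
  | single_add a b d _ hb ih =>
    have hXb : (D (X a ^ b)).IsHomogeneous b := by
      rw [Derivation.leibniz_pow, smul_eq_mul]
      obtain ⟨b, rfl⟩ := Nat.exists_eq_succ_of_ne_zero hb
      simpa using ((isHomogeneous_X_pow a b).mul (hD a)).C_mul ((b + 1 : ℕ) : R)
    rw [monomial_single_add, Derivation.leibniz, smul_eq_mul, smul_eq_mul, map_add,
      Finsupp.degree_single]
    exact ((isHomogeneous_X_pow a b).mul ih).add
      (add_comm b _ ▸ (isHomogeneous_monomial r rfl).mul hXb)

lemma homogeneousComponent_derivation (hD : ∀ i, (D (X i)).IsHomogeneous 1) (n : ℕ)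
    (p : MvPolynomial σ R) : homogeneousComponent n (D p) = D (homogeneousComponent n p) := by
  induction p using MvPolynomial.induction_on' with
  | monomial d r =>
    rw [homogeneousComponent_of_mem (isHomogeneous_derivation_monomial hD d r),
      homogeneousComponent_of_mem (isHomogeneous_monomial r rfl)]
    split_ifs <;> simp
  | add p q hp hq => simp only [map_add, hp, hq]

-- The degree operator `∑ xᵢ ∂/∂xᵢ`, not the variational Euler operator `eulerOp`.
noncomputable def eulerDerivation (s : Finset σ) :
    Derivation R (MvPolynomial σ R) (MvPolynomial σ R) :=
  ∑ i ∈ s, (X i : MvPolynomial σ R) • pderiv i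

lemma eulerDerivation_apply (s : Finset σ) (p : MvPolynomial σ R) :
    eulerDerivation s p = ∑ i ∈ s, X i * pderiv i p := by
  rw [eulerDerivation, ← Derivation.coeFnAddMonoidHom_apply, map_sum, Finset.sum_apply]
  rfl

lemma isHomogeneous_eulerDerivation_X (s : Finset σ) (j : σ) :
    (eulerDerivation s (X j : MvPolynomial σ R)).IsHomogeneous 1 := by
  rw [eulerDerivation_apply]
  exact IsHomogeneous.sum _ _ _ fun i _ => (isHomogeneous_X R i).mul (isHomogeneous_X R j).pderiv

lemma IsHomogeneous.eulerDerivation_eq {p : MvPolynomial σ R} {n : ℕ} (hp : p.IsHomogeneous n)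
    {s : Finset σ} (hs : p.vars ⊆ s) : eulerDerivation s p = n • p := by
  rw [eulerDerivation_apply]
  conv_lhs => rw [p.as_sum]
  simp only [map_sum, Finset.mul_sum, X_mul_pderiv_monomial]
  rw [Finset.sum_comm]
  conv_rhs => rw [p.as_sum, Finset.smul_sum]
  refine Finset.sum_congr rfl fun d hd => ?_
  have hd_s : d.support ⊆ s := fun i hi => hs ((mem_vars_iff_mem_support i).mpr ⟨d, hd, hi⟩)
  rw [← Finset.sum_smul, ← Finset.sum_subset hd_s (fun i _ hi => Finsupp.notMem_support_iff.mp hi),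
    ← hp.degree_eq_sum_deg_support hd]

end CommSemiring

lemma sub_C_constantCoeff_mem_of_homogeneousComponent_mem [CommRing R]
    {W : Submodule R (MvPolynomial σ R)} {p : MvPolynomial σ R}
    (hW : ∀ n, 0 < n → homogeneousComponent n p ∈ W) : p - C (constantCoeff p) ∈ W := by
  have hsplit := sum_homogeneousComponent p
  rw [Finset.sum_range_succ', homogeneousComponent_zero, ← constantCoeff_eq] at hsplit
  rw [← eq_sub_of_add_eq hsplit]
  exact W.sum_mem fun n _ => hW (n + 1) n.succ_pos

end MvPolynomial

section DifferentialPolynomial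

variable {F : Type*} [Field F]

@[simp]
lemma Dx_X (k : ℕ) : Dx F (X k) = X (k + 1) :=
  mkDerivation_X F _ k

lemma homogeneousComponent_Dx (n : ℕ) (p : MvPolynomial ℕ F) :
    homogeneousComponent n (Dx F p) = Dx F (homogeneousComponent n p) :=
  homogeneousComponent_derivation (fun k => by simpa using isHomogeneous_X F (k + 1)) n p

-- Iterated integration by parts, from `X (i + 1) * h = D (X i * h) - X i * D h`.
lemma X_mul_sub_mem_range_Dx (i : ℕ) (h : MvPolynomial ℕ F) :
    X i * h - (-1 : ℤ) ^ i • (X 0 * (Dx F)^[i] h) ∈ LinearMap.range (Dx F).toLinearMap := by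
  induction i generalizing h with
  | zero => simp
  | succ i ih =>
    have hparts : X (i + 1) * h - (-1 : ℤ) ^ (i + 1) • (X 0 * (Dx F)^[i + 1] h)
        = Dx F (X i * h) - (X i * Dx F h - (-1 : ℤ) ^ i • (X 0 * (Dx F)^[i] (Dx F h))) := by
      rw [Derivation.leibniz, Dx_X, Function.iterate_succ_apply, pow_succ, mul_smul, neg_one_zsmul,
        smul_eq_mul, smul_eq_mul, smul_neg]
      ring
    rw [hparts]
    exact Submodule.sub_mem _ ⟨_, rfl⟩ (ih (Dx F h))

lemma eulerOp_eq_sum_vars (f : MvPolynomial ℕ F) :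
    eulerOp F f = ∑ i ∈ f.vars, (-1 : ℤ) ^ i • (Dx F)^[i] (pderiv i f) := by
  refine finsum_eq_sum_of_support_subset _ fun i hi => ?_
  by_contra hif
  rw [Function.mem_support, pderiv_eq_zero_of_notMem_vars hif, iterate_map_zero, smul_zero] at hi
  exact hi rfl

lemma eulerDerivation_sub_X_zero_mul_eulerOp_mem_range_Dx (f : MvPolynomial ℕ F) :
    eulerDerivation f.vars f - X 0 * eulerOp F f ∈ LinearMap.range (Dx F).toLinearMap := by
  rw [eulerDerivation_apply, eulerOp_eq_sum_vars, Finset.mul_sum, ← Finset.sum_sub_distrib]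
  refine Submodule.sum_mem _ fun i _ => ?_
  rw [mul_smul_comm]
  exact X_mul_sub_mem_range_Dx i _

end DifferentialPolynomial

/-- Gel'fand–Dikii exactness: if `E(f) = 0` then `f = c + D(g)` for some
constant `c` and some `g`; in particular if `f` has no constant term then `f ∈ im D`. -/
theorem stmt9 (F : Type*) [Field F] [CharZero F] (f : MvPolynomial ℕ F)
    (hf : eulerOp F f = 0) :
    (∃ (c : F) (g : MvPolynomial ℕ F), f = C c + Dx F g) ∧
    (constantCoeff f = 0 → ∃ g : MvPolynomial ℕ F, f = Dx F g) := by
  obtain ⟨g, hg⟩ : eulerDerivation f.vars f ∈ LinearMap.range (Dx F).toLinearMap := by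
    simpa [hf] using eulerDerivation_sub_X_zero_mul_eulerOp_mem_range_Dx f
  have hcomp : ∀ n, 0 < n → homogeneousComponent n f ∈ LinearMap.range (Dx F).toLinearMap := by
    intro n hn
    have hscaled : (n : F) • homogeneousComponent n f = Dx F (homogeneousComponent n g) := by
      rw [Nat.cast_smul_eq_nsmul, ← (homogeneousComponent_isHomogeneous n f).eulerDerivation_eq
        (vars_homogeneousComponent_subset n f), ← homogeneousComponent_derivation
        (isHomogeneous_eulerDerivation_X _), ← homogeneousComponent_Dx]
      exact congrArg _ hg.symm
    refine ⟨(n : F)⁻¹ • homogeneousComponent n g, ?_⟩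
    simp [← hscaled, smul_smul, Nat.cast_ne_zero.mpr hn.ne']
  obtain ⟨g, hg⟩ := sub_C_constantCoeff_mem_of_homogeneousComponent_mem hcomp
  have hf_eq : f = C (constantCoeff f) + Dx F g := sub_eq_iff_eq_add'.mp hg.symm
  exact ⟨⟨_, g, hf_eq⟩, fun h0 => ⟨g, by simpa [h0] using hf_eq⟩⟩
end

section
/- In the differential polynomial ring F{X} with derivation D over a field of characteristic zero, the subspace spanned by the variables X together with all elements D(w), where w ranges over monomials with deg(w) − d(w) = 2, is closed under the symmetrized Novikov product a ∘ b = D(ab). -/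
/-!
Give the variable `x_j^{(i)}` the weight `1 - i`, so that a monomial `w` has weight
`deg(w) - d(w)`. Since `D` raises one differentiation order by one, it lowers the weight of
every homogeneous polynomial by one. Every generator of the subspace then has weight `1`
(the variables directly, `D(w)` because `w` has weight `2`), so a product of two elements of
the subspace is homogeneous of weight `2`, and applying `D` to it monomial by monomial gives a
combination of the generators `D(w)`.
-/

open MvPolynomial

/-- The derivation `D` on the differential polynomial ring `F{x₁,…,xₙ}`, modelled as
`MvPolynomial (Fin n × ℕ) F` with `x_j^{(i)} = X (j, i)`. -/
noncomputable def Dn (F : Type*) [Field F] (n : ℕ) :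
    Derivation F (MvPolynomial (Fin n × ℕ) F) (MvPolynomial (Fin n × ℕ) F) :=
  mkDerivation F fun p => X (p.1, p.2 + 1)

/-- Standard degree of a differential monomial: the total number of factors. -/
def mdeg {n : ℕ} (w : (Fin n × ℕ) →₀ ℕ) : ℕ := w.sum fun _ e => e

/-- Differential degree: the sum of all differentiation orders. -/
def mdiff {n : ℕ} (w : (Fin n × ℕ) →₀ ℕ) : ℕ := w.sum fun p e => p.2 * e

namespace MvPolynomial

theorem IsWeightedHomogeneous.mkDerivation {σ R M : Type*} [CommSemiring R] [AddCommMonoid M]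
    {w : σ → M} {k : M} {f : σ → MvPolynomial σ R}
    (hf : ∀ i, IsWeightedHomogeneous w (f i) (w i + k)) {φ : MvPolynomial σ R} {m : M}
    (hφ : IsWeightedHomogeneous w φ m) :
    IsWeightedHomogeneous w (mkDerivation R f φ) (m + k) := by
  rw [φ.as_sum, map_sum]
  refine IsWeightedHomogeneous.sum _ _ _ fun s hs => ?_
  have hs : Finsupp.weight w s = m := hφ (mem_support_iff.mp hs)
  rw [mkDerivation_monomial, ← mem_weightedHomogeneousSubmodule]
  refine Submodule.smul_mem _ _ (Submodule.sum_mem _ fun i hi => ?_)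
  have hle : Finsupp.single i 1 ≤ s :=
    Finsupp.single_le_iff.mpr (Nat.one_le_iff_ne_zero.mpr (Finsupp.mem_support_iff.mp hi))
  have hweight : Finsupp.weight w (s - Finsupp.single i 1) + w i = m := by
    rw [← hs, ← tsub_add_cancel_of_le hle, map_add, Finsupp.weight_single, one_smul,
      add_tsub_cancel_right]
  rw [mem_weightedHomogeneousSubmodule, ← hweight, add_assoc]
  exact (isWeightedHomogeneous_monomial _ _ _ rfl).mul (hf i)

end MvPolynomial

def orderWeight (n : ℕ) : Fin n × ℕ → ℤ := fun p => 1 - (p.2 : ℤ)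

theorem weight_orderWeight {n : ℕ} (w : (Fin n × ℕ) →₀ ℕ) :
    Finsupp.weight (orderWeight n) w = (mdeg w : ℤ) - (mdiff w : ℤ) := by
  simp only [Finsupp.weight_apply, mdeg, mdiff, Finsupp.sum, orderWeight]
  push_cast
  rw [← Finset.sum_sub_distrib]
  exact Finset.sum_congr rfl fun p _ => by ring

theorem isWeightedHomogeneous_orderWeight_X {F : Type*} [Field F] {n : ℕ} (p : Fin n × ℕ) :
    IsWeightedHomogeneous (orderWeight n) (X p : MvPolynomial (Fin n × ℕ) F) (1 - p.2) :=
  isWeightedHomogeneous_X F _ p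

theorem MvPolynomial.IsWeightedHomogeneous.Dn {F : Type*} [Field F] {n : ℕ}
    {φ : MvPolynomial (Fin n × ℕ) F} {m : ℤ} (hφ : IsWeightedHomogeneous (orderWeight n) φ m) :
    IsWeightedHomogeneous (orderWeight n) (Dn F n φ) (m - 1) := by
  rw [sub_eq_add_neg]
  refine hφ.mkDerivation fun p => ?_
  convert isWeightedHomogeneous_orderWeight_X (F := F) (p.1, p.2 + 1) using 1
  simp only [orderWeight]
  push_cast
  ring

theorem Dn_mem_span_of_isWeightedHomogeneous_two {F : Type*} [Field F] {n : ℕ}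
    {φ : MvPolynomial (Fin n × ℕ) F} (hφ : IsWeightedHomogeneous (orderWeight n) φ 2) :
    Dn F n φ ∈ Submodule.span F
      {p | ∃ w : (Fin n × ℕ) →₀ ℕ, mdeg w = mdiff w + 2 ∧ p = Dn F n (monomial w (1 : F))} := by
  rw [φ.as_sum, map_sum]
  refine Submodule.sum_mem _ fun v hv => ?_
  have hv : (mdeg v : ℤ) - mdiff v = 2 := weight_orderWeight v ▸ hφ (mem_support_iff.mp hv)
  rw [← mul_one (coeff v φ), ← smul_eq_mul, ← smul_monomial, Derivation.map_smul]
  exact Submodule.smul_mem _ _ (Submodule.subset_span ⟨v, by omega, rfl⟩)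

theorem stmt13_general (F : Type*) [Field F] (n : ℕ) :
    let S : Submodule F (MvPolynomial (Fin n × ℕ) F) :=
      Submodule.span F
        ({p | ∃ j : Fin n, p = X (j, 0)} ∪
          {p | ∃ w : (Fin n × ℕ) →₀ ℕ, mdeg w = mdiff w + 2 ∧ p = Dn F n (monomial w (1 : F))})
    ∀ a b : MvPolynomial (Fin n × ℕ) F, a ∈ S → b ∈ S → Dn F n (a * b) ∈ S := by
  intro S a b ha hb
  have hS : S ≤ weightedHomogeneousSubmodule F (orderWeight n) 1 := by
    rw [Submodule.span_le]
    rintro p (⟨j, rfl⟩ | ⟨w, hw, rfl⟩)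
    · simpa using isWeightedHomogeneous_orderWeight_X (F := F) (j, 0)
    · have hw : IsWeightedHomogeneous (orderWeight n) (monomial w (1 : F)) 2 :=
        isWeightedHomogeneous_monomial _ _ _ (by rw [weight_orderWeight]; omega)
      simpa using hw.Dn
  have hab : IsWeightedHomogeneous (orderWeight n) (a * b) 2 := (hS ha).mul (hS hb)
  exact Submodule.span_mono Set.subset_union_right (Dn_mem_span_of_isWeightedHomogeneous_two hab)

/-- the subspace spanned by the variables `X` together with all `D(w)` for
monomials `w` with `deg(w) − d(w) = 2` is closed under the product `a ∘ b = D(ab)`. -/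
theorem stmt13 (F : Type*) [Field F] [CharZero F] (n : ℕ) :
    let S : Submodule F (MvPolynomial (Fin n × ℕ) F) :=
      Submodule.span F
        ({p | ∃ j : Fin n, p = X (j, 0)} ∪
          {p | ∃ w : (Fin n × ℕ) →₀ ℕ, mdeg w = mdiff w + 2 ∧ p = Dn F n (monomial w (1 : F))})
    ∀ a b : MvPolynomial (Fin n × ℕ) F, a ∈ S → b ∈ S → Dn F n (a * b) ∈ S :=
  stmt13_general F n
end

section
/- A partition β = (β₁,…,β_k) of n+2 satisfies: there exists a partition α of n with the Kostka number K_{β, w(α)} > 0 if and only if β₁ − 2 ≥ β₃ + 2β₄ + ⋯ + (k−2)β_k, where w(α) ∈ P(n+2) is obtained from α = (n^{i_n},…,1^{i_1}) by sorting (n+2−Σi_j, i₁,…,i_n). -/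
/-!
Write `n(λ) = ∑ j λ_j` (`List.weightedSum`, rows indexed from `0`); the condition on `β` says exactly `n(β) ≤ n`.

In a semistandard tableau every entry of row `i` is at least `i`, so `n(β)` is at most the sum of
the entries, which is `n` of the content. For the content `w(α)` this is at most
`∑ j i_j = n`, because listing a multiset in non-increasing order minimizes `∑ j x_j` (the
minimum is the sum of the pairwise minima).

Conversely, if `n(β) ≤ n`, the highest weight tableau has content `β`, and `β = w(α)` for `α`
with part `j` of multiplicity `β_j`, the largest of these parts enlarged by `n - n(β)`; this works
when `n(β) = n` or when the last row of `β` has length `1`. Otherwise, raising the last cell of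
the last row into a new row gives a tableau with content `(β₀, …, β_{k-2}, β_{k-1} - 1, 1)` and
`n(β) + 1`, to which the same construction applies.
-/

/-- For a partition `α = (n^{i_n},…,1^{i_1})` of `n`, the partition `w(α)` of `n+2`:
the sorted (non-increasing) rearrangement of `(n+2−Σ i_j, i_1, …, i_n)` with zeros
removed, given as a list of parts in non-increasing order. Here `i_j` is the multiplicity
of the part `j` in `α`. -/
def wAlpha (n : ℕ) (α : Nat.Partition n) : List ℕ :=
  Multiset.sort
    (Multiset.filter (0 < ·)
      ((n + 2 - Multiset.card α.parts) ::ₘ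
        Multiset.map (fun j => Multiset.count j α.parts)
          (Multiset.map (· + 1) (Multiset.range n)))) (· ≥ ·)

open Finset

namespace List

def weightedSum (l : List ℕ) : ℕ := ∑ j ∈ Finset.range l.length, j * l.getD j 0

theorem sum_range_length_getD (l : List ℕ) : ∑ j ∈ Finset.range l.length, l.getD j 0 = l.sum := by
  rw [Finset.sum_range, ← List.sum_ofFn]
  simp

theorem weightedSum_cons (a : ℕ) (l : List ℕ) :
    (a :: l).weightedSum = l.weightedSum + l.sum := by
  rw [weightedSum, length_cons, Finset.sum_range_succ', weightedSum, ← l.sum_range_length_getD,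
    ← sum_add_distrib]
  simp [add_mul]

theorem map_range_length_getD (l : List ℕ) : (List.range l.length).map (l.getD · 0) = l :=
  ext_getElem (by simp) fun _ _ h => by simp [getElem?_eq_getElem h]

theorem weightedSum_cons_eq_sum (g : ℕ) (t : List ℕ) :
    (g :: t).weightedSum = ∑ j ∈ Finset.range t.length, t.getD j 0 * (j + 1) := by
  rw [weightedSum_cons, weightedSum, ← t.sum_range_length_getD, ← Finset.sum_add_distrib]
  exact Finset.sum_congr rfl fun j _ => by ring

theorem getD_map_range_of_eq_zero {f : ℕ → ℕ} {m : ℕ} (hf : ∀ a, m ≤ a → f a = 0) (a : ℕ) :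
    ((List.range m).map f).getD a 0 = f a := by
  rcases Nat.lt_or_ge a m with ha | ha
  · simp [ha]
  · rw [getD_eq_default _ _ (by simpa using ha), hf a ha]

theorem sum_pred_mul_add_sum (l : List ℕ) :
    ∑ j ∈ Finset.range l.length, (j - 1) * l.getD j 0 + l.sum = l.weightedSum + l.headI := by
  cases l with
  | nil => rfl
  | cons g t =>
    rw [weightedSum_cons, weightedSum, length_cons, Finset.sum_range_succ',
      sum_cons]
    simp only [getD_cons_succ, headI_cons, Nat.add_sub_cancel, zero_tsub, zero_mul,
      add_zero]
    ring

theorem SortedGE.getD_le_getD {l : List ℕ} (hl : l.SortedGE) {a b : ℕ} (hab : a ≤ b) :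
    l.getD b 0 ≤ l.getD a 0 := by
  by_cases hb : b < l.length
  · rw [getD_eq_getElem _ _ hb, getD_eq_getElem _ _ (hab.trans_lt hb)]
    exact hl (show (⟨a, hab.trans_lt hb⟩ : Fin l.length) ≤ ⟨b, hb⟩ from hab)
  · rw [getD_eq_default _ _ (not_lt.mp hb)]
    exact Nat.zero_le _

def sumPairwiseMin : List ℕ → ℕ
  | [] => 0
  | a :: l => (l.map (min a)).sum + l.sumPairwiseMin

theorem Perm.sumPairwiseMin_eq {l l' : List ℕ} (h : l ~ l') :
    l.sumPairwiseMin = l'.sumPairwiseMin := by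
  induction h with
  | nil => rfl
  | cons a _ ih => simp only [sumPairwiseMin, ih, ((‹_ ~ _›).map _).sum_eq]
  | swap a b l =>
    simp only [sumPairwiseMin, map_cons, sum_cons, min_comm b a]
    ring
  | trans _ _ ih₁ ih₂ => exact ih₁.trans ih₂

theorem sum_map_filter_pos {f : ℕ → ℕ} (hf : f 0 = 0) (l : List ℕ) :
    ((l.filter (0 < ·)).map f).sum = (l.map f).sum := by
  induction l with
  | nil => rfl
  | cons a l ih => rcases Nat.eq_zero_or_pos a with rfl | ha <;> simp [*]

theorem sumPairwiseMin_filter_pos (l : List ℕ) :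
    (l.filter (0 < ·)).sumPairwiseMin = l.sumPairwiseMin := by
  induction l with
  | nil => rfl
  | cons a l ih =>
    rcases Nat.eq_zero_or_pos a with rfl | ha
    · simp [sumPairwiseMin, ih, List.sum_eq_zero_iff]
    · simp [ha, sumPairwiseMin, ih, sum_map_filter_pos (Nat.min_zero a)]

theorem sumPairwiseMin_le_weightedSum (l : List ℕ) : l.sumPairwiseMin ≤ l.weightedSum := by
  induction l with
  | nil => exact le_rfl
  | cons a l ih =>
    rw [sumPairwiseMin, weightedSum_cons, add_comm]
    refine Nat.add_le_add ih ?_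
    simpa using sum_le_sum (l := l) fun x _ => min_le_right a x

theorem Pairwise.weightedSum_eq_sumPairwiseMin {l : List ℕ} (h : l.Pairwise (· ≥ ·)) :
    l.weightedSum = l.sumPairwiseMin := by
  induction l with
  | nil => rfl
  | cons a l ih =>
    rw [pairwise_cons] at h
    rw [sumPairwiseMin, weightedSum_cons, ih h.2, add_comm,
      map_congr_left (fun x hx => min_eq_right (h.1 x hx)), map_id']

theorem weightedSum_le_of_perm_filter_pos {l l' : List ℕ} (hl : l.Pairwise (· ≥ ·))
    (h : l ~ l'.filter (0 < ·)) : l.weightedSum ≤ l'.weightedSum := by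
  rw [hl.weightedSum_eq_sumPairwiseMin, h.sumPairwiseMin_eq, sumPairwiseMin_filter_pos]
  exact sumPairwiseMin_le_weightedSum l'

end List

/-- The list `(n + 2 - Σ i_j, i_1, …, i_n)` whose positive entries, sorted, form `wAlpha n α`. -/
def multiplicityList (n : ℕ) (α : n.Partition) : List ℕ :=
  (n + 2 - Multiset.card α.parts) :: (List.range n).map fun j => α.parts.count (j + 1)

theorem coe_wAlpha (n : ℕ) (α : n.Partition) :
    (wAlpha n α : Multiset ℕ) = ↑((multiplicityList n α).filter (0 < ·)) := by
  rw [wAlpha, Multiset.sort_eq, multiplicityList, Multiset.map_map, ← Multiset.coe_range,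
    Multiset.map_coe, Multiset.cons_coe, Multiset.filter_coe]
  rfl

theorem weightedSum_multiplicityList (n : ℕ) (α : n.Partition) :
    (multiplicityList n α).weightedSum = n := by
  have hsum := Finset.sum_multiset_count_of_subset α.parts (Finset.range (n + 1)) fun x hx =>
    Finset.mem_range_succ_iff.mpr (Nat.Partition.le_of_mem_parts (Multiset.mem_toFinset.mp hx))
  rw [Finset.sum_range_succ', α.parts_sum] at hsum
  rw [multiplicityList, List.weightedSum_cons_eq_sum, List.length_map, List.length_range]
  conv_rhs => rw [hsum, smul_zero, add_zero]
  exact Finset.sum_congr rfl fun j hj => by simp [Finset.mem_range.mp hj]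

theorem weightedSum_wAlpha_le (n : ℕ) (α : n.Partition) : (wAlpha n α).weightedSum ≤ n :=
  (List.weightedSum_le_of_perm_filter_pos (Multiset.pairwise_sort _ _)
    (Multiset.coe_eq_coe.mp (coe_wAlpha n α))).trans_eq (weightedSum_multiplicityList n α)

theorem Nat.Partition.card_parts_le {n : ℕ} (α : n.Partition) : Multiset.card α.parts ≤ n := by
  simpa [α.parts_sum] using Multiset.card_nsmul_le_sum (a := 1) fun _ hx => α.parts_pos hx

theorem Multiset.filter_pos_map_count_range {n : ℕ} {s : Multiset ℕ}
    (hs : ∀ x ∈ s, 0 < x ∧ x ≤ n) :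
    Multiset.filter (0 < ·) (((Multiset.range n).map (· + 1)).map (Multiset.count · s)) =
      s.dedup.map (Multiset.count · s) := by
  rw [Multiset.filter_map]
  congr 1
  refine (Multiset.Nodup.ext ?_ (Multiset.nodup_dedup s)).mpr fun x => ?_
  · exact ((Multiset.nodup_range n).map (add_left_injective 1)).filter _
  · simp only [Multiset.mem_filter, Multiset.mem_map, Multiset.mem_range, Function.comp_apply,
      Multiset.count_pos, Multiset.mem_dedup]
    constructor
    · exact fun h => h.2
    · intro hx
      exact ⟨⟨x - 1, by have := hs x hx; omega⟩, hx⟩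

theorem coe_wAlpha_eq_cons_dedup (n : ℕ) (α : n.Partition) :
    (wAlpha n α : Multiset ℕ) =
      (n + 2 - Multiset.card α.parts) ::ₘ α.parts.dedup.map (Multiset.count · α.parts) := by
  rw [wAlpha, Multiset.sort_eq, Multiset.filter_cons_of_pos _ (by have := α.card_parts_le; omega),
    Multiset.filter_pos_map_count_range fun _ hx => ⟨α.parts_pos hx, α.le_of_mem_parts hx⟩]

def partitionOfMultiplicities {n : ℕ} (S : Finset ℕ) (v q : ℕ → ℕ) (hq : ∀ j ∈ S, 0 < q j)
    (hn : ∑ j ∈ S, v j * q j = n) : n.Partition where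
  parts := ∑ j ∈ S, Multiset.replicate (v j) (q j)
  parts_pos := by
    intro x hx
    obtain ⟨j, hj, hx⟩ := Multiset.mem_sum.mp hx
    rw [Multiset.eq_of_mem_replicate hx]
    exact hq j hj
  parts_sum := by
    rw [← hn, Multiset.sum_sum]
    simp

section PartitionOfMultiplicities

variable {n : ℕ} {S : Finset ℕ} {v q : ℕ → ℕ} {hq : ∀ j ∈ S, 0 < q j}
  {hn : ∑ j ∈ S, v j * q j = n}

theorem count_parts_partitionOfMultiplicities (hinj : Set.InjOn q S) {j : ℕ} (hj : j ∈ S) :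
    (partitionOfMultiplicities S v q hq hn).parts.count (q j) = v j := by
  simp only [partitionOfMultiplicities, Multiset.count_sum', Multiset.count_replicate]
  rw [Finset.sum_eq_single_of_mem j hj fun i hi hij => if_neg fun h => hij (hinj hi hj h)]
  exact if_pos rfl

theorem dedup_parts_partitionOfMultiplicities (hv : ∀ j ∈ S, 0 < v j) (hinj : Set.InjOn q S) :
    (partitionOfMultiplicities S v q hq hn).parts.dedup = S.val.map q := by
  refine (Multiset.Nodup.ext (Multiset.nodup_dedup _) (S.nodup.map_on fun i hi j hj h =>
    hinj hi hj h)).mpr fun x => ?_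
  simp only [Multiset.mem_dedup, partitionOfMultiplicities, Multiset.mem_sum,
    Multiset.mem_replicate, Multiset.mem_map, Finset.mem_val]
  constructor
  · rintro ⟨j, hj, -, rfl⟩
    exact ⟨j, hj, rfl⟩
  · rintro ⟨j, hj, rfl⟩
    exact ⟨j, hj, (hv j hj).ne', rfl⟩

theorem coe_wAlpha_partitionOfMultiplicities (hv : ∀ j ∈ S, 0 < v j) (hinj : Set.InjOn q S) :
    (wAlpha n (partitionOfMultiplicities S v q hq hn) : Multiset ℕ) =
      (n + 2 - ∑ j ∈ S, v j) ::ₘ S.val.map v := by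
  rw [coe_wAlpha_eq_cons_dedup, dedup_parts_partitionOfMultiplicities hv hinj, Multiset.map_map]
  congr 1
  · simp [partitionOfMultiplicities, Multiset.card_sum]
  · exact Multiset.map_congr rfl fun j hj => count_parts_partitionOfMultiplicities hinj hj

end PartitionOfMultiplicities

/-- The witness has part `j + 1` with multiplicity `γ_{j+1}`, except that the part carrying the
last multiplicity is enlarged by `e`. -/
theorem exists_wAlpha_eq {n e : ℕ} {γ : List ℕ} (hsort : γ.Pairwise (· ≥ ·))
    (hpos : ∀ x ∈ γ, 0 < x) (hsum : γ.sum = n + 2) (he : e = 0 ∨ 2 ≤ γ.length)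
    (hn : γ.weightedSum + e * γ.getD (γ.length - 1) 0 = n) :
    ∃ α : n.Partition, wAlpha n α = γ := by
  obtain ⟨g, t, rfl⟩ : ∃ g t, γ = g :: t := List.exists_cons_of_ne_nil (by rintro rfl; simp at hsum)
  set q : ℕ → ℕ := fun j => j + 1 + if j + 1 = t.length then e else 0
  have hinj : Set.InjOn q (Finset.range t.length) := by
    intro i hi j hj h
    simp only [q, Finset.coe_range, Set.mem_Iio] at hi hj h
    split_ifs at h <;> omega
  have hv : ∀ j ∈ Finset.range t.length, 0 < t.getD j 0 := fun j hj => by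
    rw [List.getD_eq_getElem _ _ (Finset.mem_range.mp hj)]
    exact hpos _ (List.mem_cons_of_mem _ (List.getElem_mem _))
  have hqn : ∑ j ∈ Finset.range t.length, t.getD j 0 * q j = n := by
    rw [← hn, List.weightedSum_cons_eq_sum]
    rcases Nat.eq_zero_or_pos t.length with ht | ht
    · simp_all
    obtain ⟨m, hm⟩ := Nat.exists_eq_add_one_of_ne_zero ht.ne'
    simp only [List.length_cons, hm, Nat.add_sub_cancel, List.getD_cons_succ,
      Finset.sum_range_succ, q, ↓reduceIte]
    rw [Finset.sum_congr rfl fun j hj => by rw [if_neg (by simp at hj; omega), add_zero]]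
    ring
  have hq : ∀ j ∈ Finset.range t.length, 0 < q j := fun j _ => Nat.add_pos_left j.succ_pos _
  refine ⟨partitionOfMultiplicities _ _ q hq hqn,
    List.Perm.eq_of_pairwise' (Multiset.pairwise_sort _ _) hsort (Multiset.coe_eq_coe.mp ?_)⟩
  rw [coe_wAlpha_partitionOfMultiplicities hv hinj, t.sum_range_length_getD, Finset.range_val,
    ← Multiset.coe_range, Multiset.map_coe, t.map_range_length_getD, ← Multiset.cons_coe]
  congr 1
  simp only [List.sum_cons] at hsum
  omega

theorem YoungDiagram.rowLen_ofRowLens_eq_getD {w : List ℕ} (hw : w.SortedGE) (i : ℕ) :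
    (ofRowLens w hw).rowLen i = w.getD i 0 := by
  refine eq_of_forall_lt_iff fun c => ?_
  rw [← YoungDiagram.mem_iff_lt_rowLen, YoungDiagram.mem_ofRowLens]
  by_cases hi : i < w.length <;> simp [hi]

namespace SemistandardYoungTableau

variable {μ : YoungDiagram}

def content (T : SemistandardYoungTableau μ) (a : ℕ) : ℕ := #{c ∈ μ.cells | T c.1 c.2 = a}

theorem sum_cells_comp_eq {T : SemistandardYoungTableau μ} {γ : List ℕ}
    (hT : ∀ a, T.content a = γ.getD a 0) (f : ℕ → ℕ) :
    ∑ c ∈ μ.cells, f (T c.1 c.2) = ∑ a ∈ Finset.range γ.length, f a * γ.getD a 0 := by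
  have hmaps : ∀ c ∈ μ.cells, T c.1 c.2 ∈ Finset.range γ.length := fun c hc => by
    by_contra h
    have hzero : T.content (T c.1 c.2) = 0 := by
      rw [hT, List.getD_eq_default _ _ (by simpa using h)]
    have hpos : 0 < T.content (T c.1 c.2) :=
      Finset.card_pos.mpr ⟨c, Finset.mem_filter.mpr ⟨hc, rfl⟩⟩
    exact hpos.ne' hzero
  rw [← Finset.sum_fiberwise_of_maps_to hmaps]
  refine Finset.sum_congr rfl fun a _ => ?_
  rw [Finset.sum_congr rfl fun c hc => congrArg f (Finset.mem_filter.mp hc).2, Finset.sum_const,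
    smul_eq_mul, ← content, hT, mul_comm]

theorem card_cells_eq_sum {T : SemistandardYoungTableau μ} {γ : List ℕ}
    (hT : ∀ a, T.content a = γ.getD a 0) : #μ.cells = γ.sum := by
  have h := sum_cells_comp_eq hT fun _ => 1
  simp only [one_mul, ← Finset.card_eq_sum_ones, γ.sum_range_length_getD] at h
  exact h

theorem sum_entry_eq_weightedSum {T : SemistandardYoungTableau μ} {γ : List ℕ}
    (hT : ∀ a, T.content a = γ.getD a 0) : ∑ c ∈ μ.cells, T c.1 c.2 = γ.weightedSum :=
  sum_cells_comp_eq hT id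

theorem le_entry (T : SemistandardYoungTableau μ) {i j : ℕ} (h : (i, j) ∈ μ) : i ≤ T i j := by
  induction i with
  | zero => exact Nat.zero_le _
  | succ i ih =>
    exact (ih (μ.up_left_mem i.le_succ le_rfl h)).trans_lt (T.col_strict i.lt_succ_self h)

theorem content_highestWeight (a : ℕ) : (highestWeight μ).content a = μ.rowLen a := by
  rw [YoungDiagram.rowLen_eq_card, content, YoungDiagram.row]
  refine congrArg Finset.card (Finset.filter_congr fun c hc => ?_)
  rw [highestWeight_apply, if_pos ((YoungDiagram.mem_cells _).mp hc)]

def raiseCorner (μ : YoungDiagram) {i j : ℕ} (hright : (i, j + 1) ∉ μ)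
    (hbelow : (i + 1, j) ∉ μ) (v : ℕ) (hv : i ≤ v) : SemistandardYoungTableau μ where
  entry a b := if (a, b) ∈ μ then if (a, b) = (i, j) then v else a else 0
  row_weak' {a b₁ b₂} hb hcell := by
    rw [if_pos (μ.up_left_mem le_rfl hb.le hcell), if_pos hcell]
    split_ifs with h₁ h₂ h₂
    · simp_all
    · simp only [Prod.mk.injEq] at h₁
      exact absurd (μ.up_left_mem h₁.1.ge (by omega) hcell) hright
    · exact (Prod.mk.inj h₂).1 ▸ hv
    · exact le_rfl
  col_strict' {a₁ a₂ b} ha hcell := by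
    rw [if_pos (μ.up_left_mem ha.le le_rfl hcell), if_pos hcell]
    split_ifs with h₁ h₂ h₂
    · simp_all
    · simp only [Prod.mk.injEq] at h₁
      exact absurd (μ.up_left_mem (by omega) h₁.2.ge hcell) hbelow
    · exact ha.trans_le ((Prod.mk.inj h₂).1 ▸ hv)
    · exact ha
  zeros' h := if_neg h

section RaiseCorner

variable {i j : ℕ} {hright : (i, j + 1) ∉ μ} {hbelow : (i + 1, j) ∉ μ} {v : ℕ} {hv : i ≤ v}

theorem sum_raiseCorner_add {M : Type*} [AddCommMonoid M] (hij : (i, j) ∈ μ) (f : ℕ → M) :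
    ∑ c ∈ μ.cells, f (raiseCorner μ hright hbelow v hv c.1 c.2) + f i =
      ∑ c ∈ μ.cells, f c.1 + f v := by
  have hmem : (i, j) ∈ μ.cells := (YoungDiagram.mem_cells _).mpr hij
  have hcorner : raiseCorner μ hright hbelow v hv i j = v := by
    simp [raiseCorner, ← to_fun_eq_coe, hij]
  have hrest : ∀ c ∈ μ.cells.erase (i, j), raiseCorner μ hright hbelow v hv c.1 c.2 = c.1 := by
    intro c hc
    obtain ⟨hne, hc⟩ := Finset.mem_erase.mp hc
    change (if (c.1, c.2) ∈ μ then if (c.1, c.2) = (i, j) then v else c.1 else 0) = c.1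
    rw [if_pos ((YoungDiagram.mem_cells _).mp hc), if_neg hne]
  rw [← Finset.add_sum_erase _ _ hmem, ← Finset.add_sum_erase _ (fun c => f c.1) hmem,
    Finset.sum_congr rfl fun c hc => congrArg f (hrest c hc), hcorner]
  abel

theorem content_raiseCorner_add (hij : (i, j) ∈ μ) (a : ℕ) :
    (raiseCorner μ hright hbelow v hv).content a + (if i = a then 1 else 0) =
      μ.rowLen a + if v = a then 1 else 0 := by
  rw [content, Finset.card_filter, sum_raiseCorner_add hij fun x => if x = a then 1 else 0,
    YoungDiagram.rowLen_eq_card, YoungDiagram.row, Finset.card_filter]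

theorem sum_entry_raiseCorner_add (hij : (i, j) ∈ μ) :
    ∑ c ∈ μ.cells, raiseCorner μ hright hbelow v hv c.1 c.2 + i = ∑ c ∈ μ.cells, c.1 + v :=
  sum_raiseCorner_add hij id

end RaiseCorner

end SemistandardYoungTableau

open SemistandardYoungTableau YoungDiagram

theorem mem_ofRowLens_iff_lt_getD {β : List ℕ} {hw : β.SortedGE} {i j : ℕ} :
    (i, j) ∈ ofRowLens β hw ↔ j < β.getD i 0 := by
  rw [mem_iff_lt_rowLen, rowLen_ofRowLens_eq_getD]

def raiseLastCell (β : List ℕ) (hw : β.SortedGE) : SemistandardYoungTableau (ofRowLens β hw) :=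
  raiseCorner (ofRowLens β hw) (i := β.length - 1) (j := β.getD (β.length - 1) 0 - 1)
    (by rw [mem_ofRowLens_iff_lt_getD]; omega)
    (by rw [mem_ofRowLens_iff_lt_getD, List.getD_eq_default β 0 (n := β.length - 1 + 1) (by omega)]
        omega)
    β.length (Nat.sub_le _ 1)

section OfRowLens

variable {β : List ℕ} {hw : β.SortedGE}

theorem content_highestWeight_ofRowLens (a : ℕ) :
    (highestWeight (ofRowLens β hw)).content a = β.getD a 0 :=
  (content_highestWeight a).trans (rowLen_ofRowLens_eq_getD hw a)

theorem sum_fst_cells_ofRowLens : ∑ c ∈ (ofRowLens β hw).cells, c.1 = β.weightedSum := by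
  rw [← sum_entry_eq_weightedSum (content_highestWeight_ofRowLens (hw := hw))]
  exact Finset.sum_congr rfl fun c hc => by rw [highestWeight_apply, if_pos ((mem_cells _).mp hc)]

theorem weightedSum_le_of_content_eq_wAlpha {n : ℕ} {α : n.Partition}
    (T : SemistandardYoungTableau (ofRowLens β hw))
    (hT : ∀ a, T.content a = (wAlpha n α).getD a 0) : β.weightedSum ≤ n :=
  calc β.weightedSum = ∑ c ∈ (ofRowLens β hw).cells, c.1 := sum_fst_cells_ofRowLens.symm
    _ ≤ ∑ c ∈ (ofRowLens β hw).cells, T c.1 c.2 :=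
      Finset.sum_le_sum fun _ hc => T.le_entry ((mem_cells _).mp hc)
    _ = (wAlpha n α).weightedSum := sum_entry_eq_weightedSum hT
    _ ≤ n := weightedSum_wAlpha_le n α

theorem content_raiseLastCell_add (hlast : 0 < β.getD (β.length - 1) 0) (a : ℕ) :
    (raiseLastCell β hw).content a + (if β.length - 1 = a then 1 else 0) =
      β.getD a 0 + if β.length = a then 1 else 0 := by
  rw [raiseLastCell, content_raiseCorner_add (mem_ofRowLens_iff_lt_getD.mpr (by omega)),
    rowLen_ofRowLens_eq_getD]

theorem sum_entry_raiseLastCell (hlast : 0 < β.getD (β.length - 1) 0) :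
    ∑ c ∈ (ofRowLens β hw).cells, raiseLastCell β hw c.1 c.2 = β.weightedSum + 1 := by
  rw [raiseLastCell]
  refine Nat.add_right_cancel (m := β.length - 1) ?_
  rw [sum_entry_raiseCorner_add (mem_ofRowLens_iff_lt_getD.mpr (Nat.sub_one_lt_of_lt hlast)),
    sum_fst_cells_ofRowLens]
  have hk : 0 < β.length := List.length_pos_iff.mpr (by rintro rfl; simp at hlast)
  omega

theorem exists_content_raiseLastCell_eq_wAlpha {n : ℕ} (hsum : β.sum = n + 2)
    (hN : β.weightedSum < n) (hlast : 2 ≤ β.getD (β.length - 1) 0) :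
    ∃ α : n.Partition, ∀ a, (raiseLastCell β hw).content a = (wAlpha n α).getD a 0 := by
  have hlast' : 0 < β.getD (β.length - 1) 0 := by omega
  set k := β.length
  set c := (raiseLastCell β hw).content
  have hk : 1 ≤ k := List.length_pos_iff.mpr (by rintro rfl; simp at hsum)
  have hβzero : ∀ a, k ≤ a → β.getD a 0 = 0 := fun a ha => List.getD_eq_default _ _ ha
  have hβge : ∀ a < k, 2 ≤ β.getD a 0 := fun a ha => hlast.trans (hw.getD_le_getD (by omega))
  have hc : ∀ a, c a + (if k - 1 = a then 1 else 0) = β.getD a 0 + if k = a then 1 else 0 :=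
    content_raiseLastCell_add hlast'
  set γ := (List.range (k + 1)).map c
  have hγ : ∀ a, c a = γ.getD a 0 := fun a => by
    refine (List.getD_map_range_of_eq_zero (fun b hb => ?_) a).symm
    have := hc b
    rw [if_neg (by omega), if_neg (by omega), hβzero b (by omega)] at this
    exact this
  have hγsort : γ.Pairwise (· ≥ ·) := by
    refine List.pairwise_map.mpr (List.pairwise_lt_range.imp_of_mem fun {a b} _ hb hab => ?_)
    rw [List.mem_range] at hb
    have := hc a; have := hc b; have := hw.getD_le_getD hab.le; have := hβge a (by omega)
    have := hβzero b
    split_ifs at * <;> omega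
  have hγpos : ∀ x ∈ γ, 0 < x := by
    simp only [γ, List.mem_map, List.mem_range]
    rintro _ ⟨a, ha, rfl⟩
    have := hc a
    rcases (show a < k ∨ a = k by omega) with ha | rfl
    · have := hβge a ha
      split_ifs at * <;> omega
    · rw [if_neg (by omega), if_pos rfl] at this
      omega
  have hγsum : γ.sum = n + 2 := by
    rw [← card_cells_eq_sum hγ, card_cells_eq_sum content_highestWeight_ofRowLens, hsum]
  have hγws : γ.weightedSum = β.weightedSum + 1 := by
    rw [← sum_entry_eq_weightedSum hγ, sum_entry_raiseLastCell hlast']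
  have hγlast : γ.getD (γ.length - 1) 0 = 1 := by
    have := hc k
    rw [if_neg (by omega), if_pos rfl, hβzero k le_rfl, hγ] at this
    simpa [γ] using this
  obtain ⟨α, hα⟩ := exists_wAlpha_eq (e := n - γ.weightedSum) hγsort hγpos hγsum
    (Or.inr (by simp [γ]; omega)) (by rw [hγlast]; omega)
  exact ⟨α, fun a => hα ▸ hγ a⟩

theorem exists_content_eq_wAlpha {n : ℕ} (hpos : ∀ x ∈ β, 0 < x) (hsum : β.sum = n + 2)
    (hN : β.weightedSum ≤ n) :
    ∃ (α : n.Partition) (T : SemistandardYoungTableau (ofRowLens β hw)),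
      ∀ a, T.content a = (wAlpha n α).getD a 0 := by
  have hk : 0 < β.length := List.length_pos_iff.mpr (by rintro rfl; simp at hsum)
  have hlast : 0 < β.getD (β.length - 1) 0 := by
    rw [List.getD_eq_getElem _ _ (by omega)]
    exact hpos _ (List.getElem_mem _)
  by_cases hsimple : β.weightedSum = n ∨ β.getD (β.length - 1) 0 = 1
  · have he : n - β.weightedSum = 0 ∨ 2 ≤ β.length := by
      refine hsimple.imp (by omega) fun hone => ?_
      by_contra! hlen
      obtain ⟨g, rfl⟩ := List.length_eq_one_iff.mp (by omega : β.length = 1)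
      simp_all
    have hn : β.weightedSum + (n - β.weightedSum) * β.getD (β.length - 1) 0 = n := by
      rcases hsimple with h | h
      · simp [h]
      · rw [h]
        omega
    obtain ⟨α, hα⟩ := exists_wAlpha_eq (List.sortedGE_iff_pairwise.mp hw) hpos hsum he hn
    exact ⟨α, highestWeight _, fun a => hα ▸ content_highestWeight_ofRowLens a⟩
  · obtain ⟨α, hα⟩ := exists_content_raiseLastCell_eq_wAlpha hsum (by omega) (by omega)
    exact ⟨α, raiseLastCell β hw, hα⟩

end OfRowLens

/-- a partition `β = (β₁,…,β_k)` of `n+2` satisfies `K_{β,w(α)} > 0` for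
some partition `α` of `n` (i.e. there is a semistandard Young tableau of shape `β` and
content `w(α)`, entries being `0`-indexed) if and only if
`β₁ − 2 ≥ β₃ + 2β₄ + ⋯ + (k−2)β_k`. -/
theorem stmt18 (n : ℕ) (β : List ℕ) (hsort : β.Pairwise (· ≥ ·))
    (hpos : ∀ x ∈ β, 0 < x) (hsum : β.sum = n + 2) :
    (∃ α : Nat.Partition n,
        ∃ T : SemistandardYoungTableau (YoungDiagram.ofRowLens β (List.sortedGE_iff_pairwise.mpr hsort)),
          ∀ j : ℕ,
            ((YoungDiagram.ofRowLens β (List.sortedGE_iff_pairwise.mpr hsort)).cells.filter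
                (fun c => T c.1 c.2 = j)).card = (wAlpha n α).getD j 0) ↔
      2 + ∑ j ∈ Finset.range β.length, (j - 1) * β.getD j 0 ≤ β.headI := by
  have hpred := β.sum_pred_mul_add_sum
  rw [hsum] at hpred
  constructor
  · rintro ⟨α, T, hT⟩
    have := weightedSum_le_of_content_eq_wAlpha T hT
    omega
  · intro h
    have : β.weightedSum ≤ n := by omega
    exact exists_content_eq_wAlpha hpos hsum this
end

section
/- Let F{X} be the differential polynomial ring in x₁,…,xₙ over a field of characteristic zero, and let f be multihomogeneous with deg_{x_i}(f) > 0 for every i. If E^r(f) = 0 for some index r, then E^s(f) = 0 for every index s, where E^k is the k-th Euler operator. -/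
open MvPolynomial

/-- The `k`-th Euler operator `E^k(f) = Σ_{i≥0} (−D)^i (∂f/∂x_k^{(i)})`. -/
noncomputable def eulerOpN (F : Type*) [Field F] (n : ℕ) (k : Fin n)
    (f : MvPolynomial (Fin n × ℕ) F) : MvPolynomial (Fin n × ℕ) F :=
  ∑ᶠ i : ℕ, ((-1 : ℤ) ^ i) • ((⇑(Dn F n))^[i] (pderiv (k, i) f))

section Aux

variable (F : Type*) [Field F] (n : ℕ)

local notation "P" => MvPolynomial (Fin n × ℕ) F

/-- The derivation `Dn` as a linear map, to take powers. -/
noncomputable def LDn : MvPolynomial (Fin n × ℕ) F →ₗ[F] MvPolynomial (Fin n × ℕ) F :=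
  (Dn F n).toLinearMap

lemma LDn_apply (x : P) : LDn F n x = Dn F n x := rfl

lemma iter_Dn (i : ℕ) (x : P) : (⇑(Dn F n))^[i] x = ((LDn F n) ^ i) x := by
  rw [Module.End.pow_apply]
  rfl

lemma Dn_X (p : Fin n × ℕ) : Dn F n (X p) = X (p.1, p.2 + 1) :=
  mkDerivation_X _ _ _

lemma pderiv_Dn_zero (k : Fin n) (g : P) :
    pderiv (k, 0) (Dn F n g) = Dn F n (pderiv (k, 0) g) := by
  have h : ⁅(pderiv (k, 0) : Derivation F P P), Dn F n⁆ = 0 := by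
    apply derivation_ext
    intro q
    rw [Derivation.commutator_apply]
    rw [Dn_X, pderiv_X, pderiv_X]
    rcases q with ⟨a, b⟩
    have hne : ((a, b + 1) : Fin n × ℕ) ≠ (k, 0) := by simp
    rw [Pi.single_apply, Pi.single_apply, if_neg hne]
    by_cases hq : ((a, b) : Fin n × ℕ) = (k, 0)
    · rw [if_pos hq]; simp
    · rw [if_neg hq]; simp
  have := congrArg (fun D => D g) h
  simp only [Derivation.commutator_apply] at this
  simpa [sub_eq_zero] using this

lemma pderiv_Dn_succ (k : Fin n) (i : ℕ) (g : P) :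
    pderiv (k, i + 1) (Dn F n g) =
      Dn F n (pderiv (k, i + 1) g) + pderiv (k, i) g := by
  have h : ⁅(pderiv (k, i + 1) : Derivation F P P), Dn F n⁆ =
      (pderiv (k, i) : Derivation F P P) := by
    apply derivation_ext
    intro q
    rw [Derivation.commutator_apply]
    rw [Dn_X, pderiv_X, pderiv_X, pderiv_X]
    rcases q with ⟨a, b⟩
    have hiff : ((a, b + 1) : Fin n × ℕ) = (k, i + 1) ↔ ((a, b) : Fin n × ℕ) = (k, i) := by
      constructor <;> intro h <;>
        · rw [Prod.mk.injEq] at h ⊢; exact ⟨h.1, by omega⟩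
    rw [Pi.single_apply, Pi.single_apply, Pi.single_apply]
    by_cases hq : ((a, b) : Fin n × ℕ) = (k, i)
    · rw [if_pos hq, if_pos (hiff.mpr hq)]
      by_cases hq2 : ((a, b) : Fin n × ℕ) = (k, i + 1)
      · rw [if_pos hq2]; simp
      · rw [if_neg hq2]; simp
    · rw [if_neg hq, if_neg (fun h => hq (hiff.mp h))]
      by_cases hq2 : ((a, b) : Fin n × ℕ) = (k, i + 1)
      · rw [if_pos hq2]; simp
      · rw [if_neg hq2]; simp
  have := congrArg (fun D => D g) h
  simp only [Derivation.commutator_apply] at this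
  rw [sub_eq_iff_eq_add] at this
  rw [this]
  ring

/-- A bound beyond which no derivative-variable occurs in `f`. -/
lemma exists_bound (f : P) :
    ∃ N : ℕ, ∀ (k : Fin n) (i : ℕ), N ≤ i → (k, i) ∉ f.vars := by
  refine ⟨(f.vars.sup fun p => p.2) + 1, fun k i hi hmem => ?_⟩
  have : i ≤ f.vars.sup fun p => p.2 := Finset.le_sup (f := fun p => p.2) hmem
  omega

lemma pderiv_bound (f : P) (k : Fin n) (i N : ℕ)
    (hN : ∀ (k : Fin n) (i : ℕ), N ≤ i → (k, i) ∉ f.vars) (hi : N ≤ i) :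
    pderiv (k, i) f = 0 :=
  pderiv_eq_zero_of_notMem_vars (hN k i hi)

lemma eulerOpN_eq_sum (k : Fin n) (f : P) (N : ℕ)
    (hN : ∀ i : ℕ, N ≤ i → pderiv (k, i) f = 0) :
    eulerOpN F n k f =
      ∑ i ∈ Finset.range N, ((-1 : ℤ) ^ i) • (((LDn F n) ^ i) (pderiv (k, i) f)) := by
  unfold eulerOpN
  rw [finsum_eq_sum_of_support_subset]
  · exact Finset.sum_congr rfl fun i _ => by rw [iter_Dn]
  · intro i hi
    simp only [Function.mem_support, ne_eq] at hi
    by_contra hc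
    simp only [Finset.coe_range, Set.mem_Iio, not_lt] at hc
    apply hi
    rw [hN i hc]
    rw [iter_Dn]
    simp

/-- The Euler operator kills derivatives: `E^s(D g) = 0`. -/
lemma eulerOpN_Dn (s : Fin n) (g : P) : eulerOpN F n s (Dn F n g) = 0 := by
  obtain ⟨N, hN⟩ := exists_bound F n g
  have hg : ∀ i : ℕ, N ≤ i → pderiv (s, i) g = 0 :=
    fun i hi => pderiv_bound F n g s i N hN hi
  have hDg : ∀ i : ℕ, N + 1 ≤ i → pderiv (s, i) (Dn F n g) = 0 := by
    intro i hi
    obtain ⟨j, rfl⟩ : ∃ j, i = j + 1 := ⟨i - 1, by omega⟩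
    rw [pderiv_Dn_succ, hg (j + 1) (by omega), hg j (by omega)]
    simp
  rw [eulerOpN_eq_sum F n s (Dn F n g) (N + 1) hDg]
  have key : ∀ j : ℕ,
      ((-1 : ℤ) ^ (j + 1)) • (((LDn F n) ^ (j + 1)) (pderiv (s, j + 1) (Dn F n g)))
        = (fun i => ((-1 : ℤ) ^ i) • (((LDn F n) ^ (i + 1))
            (pderiv ((s, i) : Fin n × ℕ) g))) (j + 1)
          - (fun i => ((-1 : ℤ) ^ i) • (((LDn F n) ^ (i + 1))
            (pderiv ((s, i) : Fin n × ℕ) g))) j := by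
    intro j
    simp only []
    rw [pderiv_Dn_succ, map_add, smul_add]
    have hp1 : ((LDn F n) ^ (j + 1)) (Dn F n (pderiv ((s, j+1) : Fin n × ℕ) g))
        = ((LDn F n) ^ (j + 1 + 1)) (pderiv ((s, j+1) : Fin n × ℕ) g) := by
      rw [← LDn_apply, ← Module.End.mul_apply, ← pow_succ]
    have hp2 : ((-1 : ℤ) ^ (j + 1)) • (((LDn F n) ^ (j + 1))
          (pderiv ((s, j) : Fin n × ℕ) g))
        = -(((-1 : ℤ) ^ j) • (((LDn F n) ^ (j + 1))
          (pderiv ((s, j) : Fin n × ℕ) g))) := by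
      rw [pow_succ ((-1 : ℤ)), mul_smul]
      simp
    rw [hp1, hp2]
    abel
  rw [Finset.sum_range_succ']
  have h0 : ((-1 : ℤ) ^ 0) • (((LDn F n) ^ 0) (pderiv (s, 0) (Dn F n g)))
      = (fun i => ((-1 : ℤ) ^ i) • (((LDn F n) ^ (i + 1))
          (pderiv ((s, i) : Fin n × ℕ) g))) 0 := by
    simp only [pow_zero, one_smul, Module.End.one_apply, zero_add, pow_one]
    rw [pderiv_Dn_zero, LDn_apply]
  rw [h0, Finset.sum_congr rfl fun j _ => key j,
    Finset.sum_range_sub (f := fun i => ((-1 : ℤ) ^ i) • (((LDn F n) ^ (i + 1))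
      (pderiv ((s, i) : Fin n × ℕ) g)))]
  simp only []
  rw [hg N le_rfl]
  simp

/-- Euler's identity for a variable group `s`. -/
lemma euler_identity (f : P) (s : Fin n) (lamS : ℕ)
    (hhom : ∀ m ∈ f.support, (m.sum fun p e => if p.1 = s then e else 0) = lamS)
    (N : ℕ) (hN : ∀ (k : Fin n) (i : ℕ), N ≤ i → (k, i) ∉ f.vars) :
    ∑ i ∈ Finset.range N, X (s, i) * pderiv (s, i) f = lamS • f := by
  have hm0 : ∀ m ∈ f.support, ∀ i : ℕ, N ≤ i → m (s, i) = 0 := by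
    intro m hm i hi
    by_contra hne
    exact hN s i hi ((mem_vars _).mpr ⟨m, hm, Finsupp.mem_support_iff.mpr hne⟩)
  have hterm : ∀ (i : ℕ) (m : (Fin n × ℕ) →₀ ℕ) (c : F),
      X (s, i) * pderiv ((s, i) : Fin n × ℕ) (monomial m c)
        = m (s, i) • monomial m c := by
    intro i m c
    rw [pderiv_monomial]
    rcases Nat.eq_zero_or_pos (m (s, i)) with h0 | hpos'
    · rw [h0]; simp
    · have hle : Finsupp.single ((s, i) : Fin n × ℕ) 1 ≤ m := by
        rw [Finsupp.single_le_iff]; omega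
      have hXmul : X ((s, i) : Fin n × ℕ) *
            monomial (m - Finsupp.single ((s, i) : Fin n × ℕ) 1) (c * m (s, i))
          = monomial (Finsupp.single ((s, i) : Fin n × ℕ) 1
              + (m - Finsupp.single ((s, i) : Fin n × ℕ) 1)) (c * m (s, i)) := by
        rw [monomial_single_add, pow_one]
      rw [hXmul, add_tsub_cancel_of_le hle, smul_monomial]
      congr 1
      rw [mul_comm, nsmul_eq_mul]
  have step1 : ∀ i : ℕ, X (s, i) * pderiv ((s, i) : Fin n × ℕ) f
      = ∑ m ∈ f.support, m (s, i) • monomial m (coeff m f) := by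
    intro i
    conv_lhs => rw [← support_sum_monomial_coeff f]
    rw [map_sum, Finset.mul_sum]
    exact Finset.sum_congr rfl fun m _ => hterm i m (coeff m f)
  rw [Finset.sum_congr rfl fun i _ => step1 i, Finset.sum_comm]
  conv_rhs => rw [← support_sum_monomial_coeff f]
  rw [Finset.smul_sum]
  refine Finset.sum_congr rfl fun m hm => ?_
  rw [← Finset.sum_smul]
  congr 1
  have hsum : (∑ i ∈ Finset.range N, m (s, i))
      = m.sum fun p e => if p.1 = s then e else 0 := by
    rw [Finsupp.sum, ← Finset.sum_filter]
    have himg : ∑ i ∈ Finset.range N, m (s, i)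
        = ∑ p ∈ (Finset.range N).image (fun i => ((s, i) : Fin n × ℕ)), m p := by
      rw [Finset.sum_image (by intro a _ b _ h; simpa using h)]
    rw [himg]
    refine (Finset.sum_subset ?_ ?_).symm
    · intro p hp
      simp only [Finset.mem_filter, Finsupp.mem_support_iff] at hp
      obtain ⟨hne, hfst⟩ := hp
      simp only [Finset.mem_image, Finset.mem_range]
      refine ⟨p.2, ?_, ?_⟩
      · by_contra hc
        exact hne (by simpa [← hfst, Prod.ext_iff] using hm0 m hm p.2 (by omega))
      · rw [← hfst]
    · intro p hp hnp
      simp only [Finset.mem_image, Finset.mem_range] at hp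
      obtain ⟨i, _, rfl⟩ := hp
      by_contra hne
      exact hnp (Finset.mem_filter.mpr ⟨Finsupp.mem_support_iff.mpr hne, rfl⟩)
  rw [hsum, hhom m hm]

/-- Integration by parts, single term. -/
lemma ibp (s : Fin n) (i : ℕ) (h : P) :
    ∃ g : P, X (s, i) * h
      = X (s, 0) * (((-1 : ℤ) ^ i) • (((LDn F n) ^ i) h)) + Dn F n g := by
  induction i generalizing h with
  | zero => exact ⟨0, by simp⟩
  | succ i ih =>
    obtain ⟨g', hg'⟩ := ih (Dn F n h)
    have hder : Dn F n (X ((s, i) : Fin n × ℕ) * h)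
        = X (s, i + 1) * h + X (s, i) * Dn F n h := by
      rw [Derivation.leibniz, Dn_X, smul_eq_mul, smul_eq_mul]
      ring
    refine ⟨X (s, i) * h - g', ?_⟩
    rw [map_sub, hder]
    rw [hg']
    have hLpow : ((LDn F n) ^ i) (Dn F n h) = ((LDn F n) ^ (i + 1)) h := by
      rw [← LDn_apply, ← Module.End.mul_apply, ← pow_succ]
    rw [hLpow]
    have hsgn : ((-1 : ℤ) ^ i) • (((LDn F n) ^ (i + 1)) h)
        = -(((-1 : ℤ) ^ (i + 1)) • (((LDn F n) ^ (i + 1)) h)) := by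
      rw [pow_succ ((-1 : ℤ)), mul_smul]
      simp
    rw [hsgn]
    ring

/-- Integration by parts, summed. -/
lemma ibp_sum (s : Fin n) (N : ℕ) (f : P) :
    ∃ G : P, ∑ i ∈ Finset.range N, X (s, i) * pderiv (s, i) f
      = X (s, 0) * (∑ i ∈ Finset.range N,
          ((-1 : ℤ) ^ i) • (((LDn F n) ^ i) (pderiv (s, i) f))) + Dn F n G := by
  choose g hg using fun i : ℕ => ibp F n s i (pderiv ((s, i) : Fin n × ℕ) f)
  refine ⟨∑ i ∈ Finset.range N, g i, ?_⟩
  rw [Finset.sum_congr rfl fun i _ => hg i, Finset.sum_add_distrib, ← Finset.mul_sum,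
    ← map_sum]

end Aux

/-- if `f` is multihomogeneous with `deg_{x_i}(f) > 0` for every `i`
(every monomial of `f` has the same degree `λ i > 0` in the variable `x_i`, counting all
derivatives `x_i^{(j)}`), and `E^r(f) = 0` for some `r`, then `E^s(f) = 0` for all `s`. -/
theorem stmt19 (F : Type*) [Field F] [CharZero F] (n : ℕ)
    (f : MvPolynomial (Fin n × ℕ) F) (lam : Fin n → ℕ)
    (hpos : ∀ i, 0 < lam i)
    (hhom : ∀ m ∈ f.support, ∀ i : Fin n,
      (m.sum fun p e => if p.1 = i then e else 0) = lam i)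
    (r : Fin n) (hr : eulerOpN F n r f = 0) :
    ∀ s : Fin n, eulerOpN F n s f = 0 := by
  intro s
  obtain ⟨N, hN⟩ := exists_bound F n f
  have hp : ∀ i : ℕ, N ≤ i → pderiv ((r, i) : Fin n × ℕ) f = 0 :=
    fun i hi => pderiv_bound F n f r i N hN hi
  -- the Euler-operator sum at r vanishes
  have hEsum : ∑ i ∈ Finset.range N,
      ((-1 : ℤ) ^ i) • (((LDn F n) ^ i) (pderiv ((r, i) : Fin n × ℕ) f)) = 0 := by
    rw [← eulerOpN_eq_sum F n r f N hp, hr]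
  -- integration by parts + Euler identity
  obtain ⟨G, hG⟩ := ibp_sum F n r N f
  rw [euler_identity F n f r (lam r) (fun m hm => hhom m hm r) N hN, hEsum,
    mul_zero, zero_add] at hG
  -- hence f is a total derivative
  have hlam : ((lam r : F)) ≠ 0 := Nat.cast_ne_zero.mpr (hpos r).ne'
  have hf : f = Dn F n ((lam r : F)⁻¹ • G) := by
    have : ((lam r : F)) • f = Dn F n G := by
      rw [← hG, Nat.cast_smul_eq_nsmul]
    rw [Derivation.map_smul, ← this, ← smul_assoc, smul_eq_mul, inv_mul_cancel₀ hlam, one_smul]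
  rw [hf]
  exact eulerOpN_Dn F n s _
end
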